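/- In the independent-dropping model (particle sites chosen i.i.d. with distribution p, p(i) > 0 for all i ∈ V) on a finite connected graph, the induced Markov chain on profiles x satisfies inf_{x∈S} M^{|V|−1}(x, S₁) ≥ α where α = min_{i∈V} ∏_{j=1}^{|V|−1} p(a_j^{(i)}) > 0 and S₁ = {x^{(i)} : i ∈ V} is the finite set of profiles generated by the i-orderings. -/

import Mathlib

-- n-step transition probabilities of a kernel on a countable space.
open Classical in
noncomputable def mpow {S : Type*} (M : S → S → ℝ) : ℕ → S → S → ℝ
  | 0 => fun x y => if x = y then 1 else 0
  | (n + 1) => fun x y => ∑' z, mpow M n x z * M z y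

-- Adding a particle at `i` with screening, acting on (ℤ-valued) height profiles.
open Classical in
noncomputable def dropZ {V : Type*} [Fintype V] (G : SimpleGraph V) (i : V) (x : V → ℤ) :
    V → ℤ :=
  fun j => if j = i then
    (Finset.univ.filter fun k => k = i ∨ G.Adj i k).sup'
      ⟨i, by simp⟩ x + 1
  else x j

-- Profile seen from the maximum: subtract the maximal height.
noncomputable def normP {V : Type*} [Fintype V] [Nonempty V] (x : V → ℤ) : V → ℤ :=
  fun j => x j - Finset.univ.sup' Finset.univ_nonempty x

-- Transition matrix of the profile chain for independent droppings with law `p`.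
open Classical in
noncomputable def Mchain {V : Type*} [Fintype V] [Nonempty V] (G : SimpleGraph V)
    (p : V → ℝ) (x y : V → ℤ) : ℝ :=
  ∑ i : V, if y = normP (dropZ G i x) then p i else 0

-- The profile `x⁽ⁱ⁾` obtained by dropping particles along the `i`-ordering `ord i`
-- starting from a profile with maximum at `i`.
noncomputable def xprof {V : Type*} [Fintype V] [Nonempty V] (G : SimpleGraph V)
    (ord : V → Fin (Fintype.card V - 1) → V) (i : V) : V → ℤ :=
  normP ((List.ofFn (ord i)).foldl (fun x v => dropZ G v x) (fun _ => 0))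


/-!
Let `x ≤ 0` be a profile with `x i = 0`. Dropping particles along the `i`-ordering, from `x`
or from the zero profile, produces the same heights on every vertex visited so far (`i`
included), and these heights are `≥ 0`: each newly visited vertex has a visited neighbour,
whose height `≥ 0` dominates the heights `≤ 0` of the unvisited vertices in its neighbourhood.
After `|V| − 1` drops every vertex is visited, so this drop sequence carries `x` to `x⁽ⁱ⁾`,
and it has probability `∏ⱼ p(a_j⁽ⁱ⁾) ≥ α`.
-/

section Kernel

variable {S : Type*} {M : S → S → ℝ}

theorem mpow_nonneg (hM : ∀ x y, 0 ≤ M x y) : ∀ n x y, 0 ≤ mpow M n x y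
  | 0, x, y => by unfold mpow; split_ifs <;> norm_num
  | n + 1, x, y => tsum_nonneg fun z => mul_nonneg (mpow_nonneg hM n x z) (hM z y)

theorem mpow_support_finite (hM : ∀ x, (Function.support (M x)).Finite) :
    ∀ n x, (Function.support (mpow M n x)).Finite
  | 0, x => (Set.finite_singleton x).subset fun y hy => by
      by_contra hxy
      exact hy (by simp [mpow, Ne.symm hxy])
  | n + 1, x => by
      refine ((mpow_support_finite hM n x).biUnion fun z _ => hM z).subset fun y hy => ?_
      obtain ⟨z, hz⟩ : ∃ z, mpow M n x z * M z y ≠ 0 := by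
        by_contra! h
        exact hy (by simp [mpow, h])
      exact Set.mem_biUnion (left_ne_zero_of_mul hz) (right_ne_zero_of_mul hz)

theorem mpow_mul_le_mpow_succ (hM : ∀ x y, 0 ≤ M x y)
    (hfin : ∀ x, (Function.support (M x)).Finite) (n : ℕ) (x z y : S) :
    mpow M n x z * M z y ≤ mpow M (n + 1) x y := by
  have hsum : Summable fun w => mpow M n x w * M w y :=
    summable_of_hasFiniteSupport <| (mpow_support_finite hfin n x).subset
      fun w hw => left_ne_zero_of_mul hw
  exact hsum.le_tsum z fun w _ => mul_nonneg (mpow_nonneg hM n x w) (hM w y)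

theorem prod_le_mpow_foldl {α : Type*} (hM : ∀ x y, 0 ≤ M x y)
    (hfin : ∀ x, (Function.support (M x)).Finite) (step : α → S → S) (w : α → ℝ)
    (hw0 : ∀ a, 0 ≤ w a) (hw : ∀ a s, w a ≤ M s (step a s)) (L : List α) (x : S) :
    (L.map w).prod ≤ mpow M L.length x (L.foldl (fun s a => step a s) x) := by
  induction L using List.reverseRecOn with
  | nil => simp [mpow]
  | append_singleton L a ih =>
    rw [List.map_append, List.prod_append, List.length_append, List.foldl_append]
    calc (L.map w).prod * ([a].map w).prod
        ≤ mpow M L.length x (L.foldl (fun s a => step a s) x) *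
            M (L.foldl (fun s a => step a s) x) (step a (L.foldl (fun s a => step a s) x)) := by
          simpa using mul_le_mul ih (hw a _) (hw0 a) (mpow_nonneg hM _ _ _)
      _ ≤ _ := mpow_mul_le_mpow_succ hM hfin _ _ _ _

end Kernel

section Profile

variable {V : Type*} [Fintype V] (G : SimpleGraph V)

theorem dropZ_add_const (v : V) (x : V → ℤ) (c : ℤ) :
    dropZ G v (fun j => x j + c) = fun j => dropZ G v x j + c := by
  funext j
  by_cases hj : j = v
  · simp only [dropZ, if_pos hj]
    exact (congrArg (· + 1) (Finset.sup'_add _ x c _)).symm.trans (add_right_comm _ _ _)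
  · simp only [dropZ, if_neg hj]

variable [Nonempty V]

theorem normP_add_const (x : V → ℤ) (c : ℤ) : normP (fun j => x j + c) = normP x := by
  funext j
  simp only [normP, ← Finset.sup'_add]
  ring

theorem normP_eq_self {x : V → ℤ} (hx : ∀ j, x j ≤ 0) {i : V} (hi : x i = 0) : normP x = x := by
  have hsup : Finset.univ.sup' Finset.univ_nonempty x = 0 :=
    le_antisymm (Finset.sup'_le _ _ fun j _ => hx j) (hi ▸ Finset.le_sup' x (Finset.mem_univ i))
  funext j
  simp [normP, hsup]

theorem normP_dropZ_normP (v : V) (x : V → ℤ) :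
    normP (dropZ G v (normP x)) = normP (dropZ G v x) := by
  have hshift : normP x = fun j => x j + -Finset.univ.sup' Finset.univ_nonempty x :=
    funext fun j => sub_eq_add_neg _ _
  rw [hshift, dropZ_add_const, normP_add_const]

theorem foldl_normP_dropZ (L : List V) (x : V → ℤ) :
    L.foldl (fun s v => normP (dropZ G v s)) (normP x) =
      normP (L.foldl (fun s v => dropZ G v s) x) := by
  induction L generalizing x with
  | nil => rfl
  | cons v L ih => rw [List.foldl_cons, List.foldl_cons, normP_dropZ_normP, ih]

theorem Mchain_nonneg {p : V → ℝ} (hp : ∀ i, 0 ≤ p i) (x y : V → ℤ) : 0 ≤ Mchain G p x y :=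
  Finset.sum_nonneg fun i _ => by split_ifs <;> simp [hp i]

theorem le_Mchain_normP_dropZ {p : V → ℝ} (hp : ∀ i, 0 ≤ p i) (i : V) (x : V → ℤ) :
    p i ≤ Mchain G p x (normP (dropZ G i x)) := by
  unfold Mchain
  have hterm := Finset.single_le_sum
    (f := fun j => if normP (dropZ G i x) = normP (dropZ G j x) then p j else 0)
    (fun j _ => by split_ifs <;> simp [hp j]) (Finset.mem_univ i)
  simpa using hterm

theorem support_Mchain_finite (p : V → ℝ) (x : V → ℤ) :
    (Function.support (Mchain G p x)).Finite := by
  refine (Set.finite_range fun i => normP (dropZ G i x)).subset fun y hy => ?_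
  obtain ⟨i, -, hi⟩ := Finset.exists_ne_zero_of_sum_ne_zero hy
  by_contra hy'
  exact hi (if_neg fun h => hy' ⟨i, h.symm⟩)

end Profile

section Synced

variable {V : Type*}

-- The invariant of two drop processes run along the same vertices, `D` being the visited set.
def SyncedOn (D : Set V) (y z : V → ℤ) : Prop :=
  (∀ u ∈ D, y u = z u ∧ 0 ≤ y u) ∧ ∀ u ∉ D, y u ≤ 0 ∧ z u ≤ 0

variable {D : Set V} {y z : V → ℤ}

theorem SyncedOn.symm (h : SyncedOn D y z) : SyncedOn D z y :=
  ⟨fun u hu => ⟨(h.1 u hu).1.symm, (h.1 u hu).1 ▸ (h.1 u hu).2⟩, fun u hu => (h.2 u hu).symm⟩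

theorem SyncedOn.sup'_le (h : SyncedOn D y z) {N : Finset V} (hN : N.Nonempty) {j : V}
    (hjN : j ∈ N) (hjD : j ∈ D) : N.sup' hN y ≤ N.sup' hN z := by
  refine Finset.sup'_le _ _ fun u hu => ?_
  by_cases huD : u ∈ D
  · exact (h.1 u huD).1 ▸ Finset.le_sup' z hu
  · calc y u ≤ 0 := (h.2 u huD).1
      _ ≤ z j := (h.1 j hjD).1 ▸ (h.1 j hjD).2
      _ ≤ N.sup' hN z := Finset.le_sup' z hjN

variable [Fintype V] {G : SimpleGraph V}

-- `open Classical` makes the neighbourhood filter below use the same instance as `dropZ`.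
open Classical in
theorem SyncedOn.dropZ_insert (h : SyncedOn D y z) {v j : V} (hjD : j ∈ D) (hadj : G.Adj v j) :
    SyncedOn (insert v D) (dropZ G v y) (dropZ G v z) := by
  refine ⟨fun u hu => ?_, fun u hu => ?_⟩
  · by_cases huv : u = v
    · subst huv
      simp only [dropZ, ↓reduceIte]
      have hjN : j ∈ Finset.univ.filter fun k => k = u ∨ G.Adj u k := by simp [hadj]
      refine ⟨congrArg (· + 1) (le_antisymm (h.sup'_le _ hjN hjD) (h.symm.sup'_le _ hjN hjD)), ?_⟩
      have hj_le := Finset.le_sup' y hjN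
      have hj_nonneg := (h.1 j hjD).2
      omega
    · simp only [dropZ, if_neg huv]
      exact h.1 u (hu.resolve_left huv)
  · rw [Set.mem_insert_iff, not_or] at hu
    simp only [dropZ, if_neg hu.1]
    exact h.2 u hu.2

theorem SyncedOn.foldl_dropZ (L : List V)
    (hL : ∀ n (hn : n < L.length), ∃ j, (j ∈ D ∨ j ∈ L.take n) ∧ G.Adj L[n] j)
    (h : SyncedOn D y z) :
    SyncedOn (D ∪ {u | u ∈ L}) (L.foldl (fun s v => dropZ G v s) y)
      (L.foldl (fun s v => dropZ G v s) z) := by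
  induction L generalizing D y z with
  | nil => simpa using h
  | cons v L ih =>
    obtain ⟨j, hj, hadj⟩ := hL 0 (by simp)
    have hL' : ∀ n (hn : n < L.length), ∃ j, (j ∈ insert v D ∨ j ∈ L.take n) ∧ G.Adj L[n] j :=
      fun n hn => by
        obtain ⟨j, hj, hadj⟩ := hL (n + 1) (by simpa using hn)
        refine ⟨j, ?_, by simpa using hadj⟩
        simp only [List.take_succ_cons, List.mem_cons, Set.mem_insert_iff] at hj ⊢
        tauto
    have hD : D ∪ {u | u ∈ v :: L} = insert v D ∪ {u | u ∈ L} := by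
      ext u
      simp [or_left_comm, or_assoc]
    rw [hD]
    exact ih hL' (h.dropZ_insert (by simpa using hj) hadj)

theorem foldl_dropZ_ofFn_eq_of_adj {m : ℕ} {i : V} {a : Fin m → V} (hcover : {i}ᶜ ⊆ Set.range a)
    (hadj : ∀ k, ∃ j, (j = i ∨ ∃ l, l < k ∧ a l = j) ∧ G.Adj (a k) j)
    {x : V → ℤ} (hx : ∀ j, x j ≤ 0) (hi : x i = 0) :
    (List.ofFn a).foldl (fun s v => dropZ G v s) x =
      (List.ofFn a).foldl (fun s v => dropZ G v s) (fun _ => 0) := by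
  have hstart : SyncedOn {i} x (fun _ => 0) :=
    ⟨fun u hu => by simp_all, fun u _ => ⟨hx u, le_rfl⟩⟩
  have hL : ∀ n (hn : n < (List.ofFn a).length), ∃ j,
      (j ∈ ({i} : Set V) ∨ j ∈ (List.ofFn a).take n) ∧ G.Adj (List.ofFn a)[n] j := by
    intro n hn
    rw [List.length_ofFn] at hn
    obtain ⟨j, hj, hvj⟩ := hadj ⟨n, hn⟩
    refine ⟨j, ?_, by simpa using hvj⟩
    rcases hj with rfl | ⟨l, hl, rfl⟩
    · exact Or.inl rfl
    · exact Or.inr (List.mem_take_iff_getElem.2 ⟨l, by simp [Fin.lt_def] at hl ⊢; omega, by simp⟩)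
  have hend := hstart.foldl_dropZ (List.ofFn a) hL
  funext u
  refine (hend.1 u ?_).1
  by_cases hu : u = i
  · exact Or.inl hu
  · obtain ⟨l, rfl⟩ := hcover hu
    exact Or.inr (List.mem_ofFn.2 ⟨l, rfl⟩)

end Synced

open Classical in
theorem stmt13_general {V : Type*} [Fintype V] [Nonempty V] (G : SimpleGraph V)
    (p : V → ℝ) (hp : ∀ i, 0 < p i)
    (ord : V → Fin (Fintype.card V - 1) → V)
    (hrange : ∀ i, Set.range (ord i) = {i}ᶜ)
    (hord : ∀ i k, ∃ j, (j = i ∨ ∃ l, l < k ∧ ord i l = j) ∧ G.Adj (ord i k) j) :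
    0 < Finset.univ.inf' Finset.univ_nonempty (fun i : V => ∏ j, p (ord i j)) ∧
    ∀ x : V → ℤ, (∀ j, x j ≤ 0) → (∃ j, x j = 0) →
      Finset.univ.inf' Finset.univ_nonempty (fun i : V => ∏ j, p (ord i j)) ≤
        ∑ y ∈ Finset.univ.image (fun i => xprof G ord i),
          mpow (Mchain G p) (Fintype.card V - 1) x y := by
  have hp0 : ∀ i, 0 ≤ p i := fun i => (hp i).le
  refine ⟨(Finset.lt_inf'_iff _).2 fun i _ => Finset.prod_pos fun j _ => hp _, ?_⟩
  rintro x hx ⟨i, hi⟩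
  have hpath := prod_le_mpow_foldl (Mchain_nonneg G hp0) (support_Mchain_finite G p)
    (fun v s => normP (dropZ G v s)) p hp0 (le_Mchain_normP_dropZ G hp0) (List.ofFn (ord i))
    (normP x)
  rw [foldl_normP_dropZ, normP_eq_self hx hi,
    foldl_dropZ_ofFn_eq_of_adj (hrange i).ge (hord i) hx hi, List.length_ofFn, List.map_ofFn,
    List.prod_ofFn] at hpath
  calc Finset.univ.inf' Finset.univ_nonempty (fun i : V => ∏ j, p (ord i j))
      ≤ ∏ j, p (ord i j) := Finset.inf'_le _ (Finset.mem_univ i)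
    _ ≤ mpow (Mchain G p) (Fintype.card V - 1) x (xprof G ord i) := hpath
    _ ≤ _ := Finset.single_le_sum (fun y _ => mpow_nonneg (Mchain_nonneg G hp0) _ x y)
        (Finset.mem_image_of_mem _ (Finset.mem_univ i))

open Classical in
/-- In the independent-dropping model, the profile chain enters the finite set
`S₁ = {x⁽ⁱ⁾ : i ∈ V}` in `|V| − 1` steps with probability at least
`α = min_i ∏_j p(a_j⁽ⁱ⁾) > 0`, uniformly in the starting profile. -/
theorem stmt13 {V : Type*} [Fintype V] [DecidableEq V] [Nonempty V] (G : SimpleGraph V)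
    (hconn : G.Connected)
    (p : V → ℝ) (hp : ∀ i, 0 < p i) (hp1 : ∑ i : V, p i = 1)
    (ord : V → Fin (Fintype.card V - 1) → V)
    (hinj : ∀ i, Function.Injective (ord i))
    (hrange : ∀ i, Set.range (ord i) = {i}ᶜ)
    (hord : ∀ i k, ∃ j, (j = i ∨ ∃ l, l < k ∧ ord i l = j) ∧ G.Adj (ord i k) j) :
    0 < Finset.univ.inf' Finset.univ_nonempty (fun i : V => ∏ j, p (ord i j)) ∧
    ∀ x : V → ℤ, (∀ j, x j ≤ 0) → (∃ j, x j = 0) →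
      Finset.univ.inf' Finset.univ_nonempty (fun i : V => ∏ j, p (ord i j)) ≤
        ∑ y ∈ Finset.univ.image (fun i => xprof G ord i),
          mpow (Mchain G p) (Fintype.card V - 1) x y :=
  stmt13_general G p hp ord hrange hord
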